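/- arXiv:1206.2611 — 9 statements merged into one kernel-verified Lean document; each statement's English description precedes it below -/
import Mathlib

section
/- Let S be a unique factorization domain, let F(x) ∈ S[x, x⁻¹] be a Laurent polynomial in x with coefficients in S, and let P be an irreducible element of S. Then there exists a unique integer m ∈ ℤ such that G(x) = xᵐ·F(x) satisfies: (1) G(P/x) is a Laurent polynomial in S[x, x⁻¹], and (2) G(P/x) is not divisible by P in S[x, x⁻¹]. -/
/-!
Writing `v` for the `P`-adic valuation, the coefficient `F n P^(n+m)` of `G(P/x)` lies in `S`
iff `m ≥ -n - v(F n)`, and is divisible by `P` iff `m > -n - v(F n)`. Hence (1) says that `m`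
bounds the finitely many numbers `-n - v(F n)` (`F n ≠ 0`) from above, and (2) says that `m` is
not strictly above all of them: `m` is their maximum.
-/

open Function

theorem Finset.existsUnique_forall_le_not_forall_lt {ι α : Type*} [LinearOrder α]
    {s : Finset ι} (hs : s.Nonempty) (f : ι → α) :
    ∃! a, (∀ i ∈ s, f i ≤ a) ∧ ¬ ∀ i ∈ s, f i < a := by
  obtain ⟨i₀, hi₀, hmax⟩ := s.exists_mem_eq_sup' hs f
  refine ⟨s.sup' hs f, ⟨fun i hi => s.le_sup' f hi, fun hlt => (hlt i₀ hi₀).ne hmax.symm⟩, ?_⟩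
  rintro a ⟨hle, hnlt⟩
  push Not at hnlt
  obtain ⟨i, hi, hai⟩ := hnlt
  exact le_antisymm (hai.trans (s.le_sup' f hi)) (s.sup'_le hs f hle)

section Multiplicity

variable {S : Type*} [CommMonoidWithZero S] [IsCancelMulZero S] [WfDvdMonoid S] {P c : S}

theorem exists_mul_pow_eq_mul_pow_iff (hP : Prime P) (hc : c ≠ 0) (k b : ℕ) :
    (∃ s, s * P ^ k = c * P ^ b) ↔ k ≤ multiplicity P c + b := by
  have hfin : FiniteMultiplicity P (c * P ^ b) :=
    .of_not_isUnit hP.not_isUnit (mul_ne_zero hc (pow_ne_zero _ hP.ne_zero))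
  have hmul : multiplicity P (c * P ^ b) = multiplicity P c + b := by
    rw [multiplicity_mul hP hfin, multiplicity_pow_self_of_prime hP]
  simp_rw [← hmul, ← hfin.pow_dvd_iff_le_multiplicity, dvd_iff_exists_eq_mul_left, eq_comm]

theorem exists_mul_pow_toNat_eq_iff (hP : Prime P) (hc : c ≠ 0) (n m : ℤ) (j : ℕ) :
    (∃ s, s * P ^ ((-(n + m)).toNat + j) = c * P ^ (n + m).toNat) ↔
      -n - (multiplicity P c : ℤ) + j ≤ m := by
  rw [exists_mul_pow_eq_mul_pow_iff hP hc]
  omega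

theorem forall_exists_mul_pow_toNat_eq_iff (hP : Prime P) {F : ℤ → S}
    (hF : (support F).Finite) (m : ℤ) (j : ℕ) :
    (∀ n, ∃ s, s * P ^ ((-(n + m)).toNat + j) = F n * P ^ (n + m).toNat) ↔
      ∀ n ∈ hF.toFinset, -n - (multiplicity P (F n) : ℤ) + j ≤ m := by
  refine forall_congr' fun n => ?_
  by_cases hn : F n = 0
  · simp [hn]
  · simp only [hn, Set.Finite.mem_toFinset, mem_support, ne_eq, not_false_eq_true, forall_const]
    exact exists_mul_pow_toNat_eq_iff hP hn n m j

end Multiplicity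

/-- Let `S` be a UFD, `F` a nonzero Laurent polynomial in `x` over `S` (encoded as a finitely
supported function `ℤ → S` of coefficients), and `P` an irreducible element of `S`.
Then there is a unique `m : ℤ` such that `G(x) = x^m F(x)` satisfies:
(1) `G(P/x)` is a Laurent polynomial over `S` (coefficientwise: the coefficient
`F n * P^(n+m)` of `x^{-(n+m)}` lies in `S`), and
(2) `G(P/x)` is not divisible by `P` in `S[x,x⁻¹]`. -/
theorem stmt0 {S : Type*} [CommRing S] [IsDomain S] [UniqueFactorizationMonoid S]
    (P : S) (hP : Irreducible P) (F : ℤ → S)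
    (hFfin : (Function.support F).Finite) (hF : F ≠ 0) :
    ∃! m : ℤ,
      (∀ n : ℤ, ∃ s : S, s * P ^ (-(n + m)).toNat = F n * P ^ (n + m).toNat) ∧
      ¬ (∀ n : ℤ, ∃ s : S, s * P ^ ((-(n + m)).toNat + 1) = F n * P ^ (n + m).toNat) := by
  have hPp : Prime P := hP.prime
  have hsupp : hFfin.toFinset.Nonempty := by simpa using hF
  refine (existsUnique_congr fun m => and_congr ?_ (not_congr ?_)).mpr
    (Finset.existsUnique_forall_le_not_forall_lt hsupp fun n => -n - (multiplicity P (F n) : ℤ))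
  · simpa using forall_exists_mul_pow_toNat_eq_iff hPp hFfin m 0
  · simpa [Int.add_one_le_iff] using forall_exists_mul_pow_toNat_eq_iff hPp hFfin m 1
end

section
/- Let F = ∏_{b_i > 0} x_i^{b_i} + ∏_{b_i < 0} x_i^{-b_i} be a binomial in ℤ[x_1, …, x_m], where (b_1, …, b_m) ∈ ℤᵐ is a primitive integer vector (nonzero with gcd of entries equal to 1). Then F is irreducible in ℤ[x_1, …, x_m]. -/
/-!
Fix a weight `w`. The largest `w`-weight of a monomial of `p * q` is the sum of those of `p` and
`q`, since the top `w`-homogeneous components of `p` and `q` have nonzero product. Applied to `w`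
and `-w`, the spread (largest minus smallest weight) is additive under multiplication: the Newton
polytope of a product is the Minkowski sum of those of the factors.

For `F = x^α + x^β` with `b = α - β`, the spread of `F` in direction `w` is `|⟪w, b⟫|`. If
`F = P * Q`, both factors have spread `0` in every direction orthogonal to `b`, so exponent
differences within a factor are multiples `k • b` with `k ∈ ℤ`, by primitivity of `b`. In
direction `b`, a factor with two distinct monomials then has spread at least `⟪b, b⟫`, and the
spreads of `P` and `Q` add up to `⟪b, b⟫`, so one factor is a monomial `c x^u`. It divides `F`,
so `u ≤ α ⊓ β = 0` and `c` is a unit.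
-/

open Finsupp

theorem Finsupp.weight_neg {σ M : Type*} [AddCommGroup M] (w : σ → M) (a : σ →₀ ℕ) :
    weight (-w) a = -weight w a := by
  simp [weight_apply, Finsupp.sum_neg]

theorem Finsupp.weight_sub_weight_eq_dotProduct {σ : Type*} [Fintype σ] (w : σ → ℤ)
    (a c : σ →₀ ℕ) : weight w a - weight w c = w ⬝ᵥ fun i => (a i : ℤ) - c i := by
  simp [weight_eq_sum, dotProduct, mul_sub, mul_comm]

-- Test `d` against `e_i - b i • g`, which is orthogonal to `b`.
theorem eq_dotProduct_smul_of_forall_dotProduct_eq_zero {ι R : Type*} [Fintype ι] [DecidableEq ι]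
    [CommRing R] {b d g : ι → R} (hg : g ⬝ᵥ b = 1) (h : ∀ w, w ⬝ᵥ b = 0 → w ⬝ᵥ d = 0) :
    d = (g ⬝ᵥ d) • b := by
  ext i
  have := h (Pi.single i 1 - b i • g) (by simp [sub_dotProduct, smul_dotProduct, hg])
  simp only [sub_dotProduct, smul_dotProduct, single_dotProduct, one_mul, smul_eq_mul] at this
  simp only [Pi.smul_apply, smul_eq_mul]
  linear_combination this

namespace MvPolynomial

variable {R σ M : Type*}

section CommSemiring

variable [CommSemiring R]

theorem support_monomial_add_monomial [DecidableEq σ] [Nontrivial R] {α β : σ →₀ ℕ}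
    (hαβ : α ≠ β) : (monomial α (1 : R) + monomial β 1).support = {α, β} := by
  ext s
  by_cases hsα : s = α <;> by_cases hsβ : s = β <;> simp_all [coeff_monomial, eq_comm]

section LinearOrder

variable [AddCommMonoid M] [LinearOrder M]

theorem coe_weight_le_weightedTotalDegree' (w : σ → M) {p : MvPolynomial σ R} {a : σ →₀ ℕ}
    (ha : a ∈ p.support) : (weight w a : WithBot M) ≤ weightedTotalDegree' w p :=
  Finset.le_sup (f := fun s => (weight w s : WithBot M)) ha

theorem exists_mem_support_weightedTotalDegree'_eq (w : σ → M) {p : MvPolynomial σ R}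
    (hp : p ≠ 0) : ∃ a ∈ p.support, weightedTotalDegree' w p = weight w a :=
  Finset.exists_mem_eq_sup _ (support_nonempty.2 hp) _

variable [IsOrderedCancelAddMonoid M]

theorem coeff_mul_eq_coeff_mul_weightedHomogeneousComponent {w : σ → M}
    {p q : MvPolynomial σ R} {m n : M} (hp : ∀ a ∈ p.support, weight w a ≤ m)
    (hq : ∀ c ∈ q.support, weight w c ≤ n) {s : σ →₀ ℕ} (hs : weight w s = m + n) :
    coeff s (p * q) =
      coeff s (weightedHomogeneousComponent w m p * weightedHomogeneousComponent w n q) := by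
  classical
  simp only [coeff_mul, coeff_weightedHomogeneousComponent]
  refine Finset.sum_congr rfl fun ⟨a, c⟩ hac => ?_
  by_cases ha : coeff a p = 0
  · simp [ha]
  by_cases hc : coeff c q = 0
  · simp [hc]
  obtain ⟨ham, hcn⟩ := (add_eq_add_iff_eq_and_eq (hp a (mem_support_iff.2 ha))
    (hq c (mem_support_iff.2 hc))).1
    (by rw [← map_add, Finset.HasAntidiagonal.mem_antidiagonal.1 hac, hs])
  simp [ham, hcn]

theorem weightedTotalDegree'_mul [NoZeroDivisors R] (w : σ → M) (p q : MvPolynomial σ R) :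
    weightedTotalDegree' w (p * q) = weightedTotalDegree' w p + weightedTotalDegree' w q := by
  classical
  rcases eq_or_ne p 0 with rfl | hp
  · simp [weightedTotalDegree'_zero]
  rcases eq_or_ne q 0 with rfl | hq
  · simp [weightedTotalDegree'_zero]
  obtain ⟨a, ha, hpa⟩ := exists_mem_support_weightedTotalDegree'_eq w hp
  obtain ⟨c, hc, hqc⟩ := exists_mem_support_weightedTotalDegree'_eq w hq
  have hp_le : ∀ a' ∈ p.support, weight w a' ≤ weight w a := fun a' ha' =>
    WithBot.coe_le_coe.1 (hpa ▸ coe_weight_le_weightedTotalDegree' w ha')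
  have hq_le : ∀ c' ∈ q.support, weight w c' ≤ weight w c := fun c' hc' =>
    WithBot.coe_le_coe.1 (hqc ▸ coe_weight_le_weightedTotalDegree' w hc')
  rw [hpa, hqc, ← WithBot.coe_add]
  refine le_antisymm (Finset.sup_le fun s hs => ?_) ?_
  · obtain ⟨a', ha', c', hc', rfl⟩ := Finset.mem_add.1 (support_mul p q hs)
    rw [map_add, WithBot.coe_le_coe]
    exact add_le_add (hp_le a' ha') (hq_le c' hc')
  · have htop : weightedHomogeneousComponent w (weight w a) p *
        weightedHomogeneousComponent w (weight w c) q ≠ 0 :=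
      mul_ne_zero (ne_zero_iff.2 ⟨a, by simpa [coeff_weightedHomogeneousComponent] using ha⟩)
        (ne_zero_iff.2 ⟨c, by simpa [coeff_weightedHomogeneousComponent] using hc⟩)
    obtain ⟨s, hs⟩ := ne_zero_iff.1 htop
    have hws : weight w s = weight w a + weight w c :=
      ((weightedHomogeneousComponent_isWeightedHomogeneous _ p).mul
        (weightedHomogeneousComponent_isWeightedHomogeneous _ q)) hs
    rw [← hws]
    refine coe_weight_le_weightedTotalDegree' w (mem_support_iff.2 ?_)
    rwa [coeff_mul_eq_coeff_mul_weightedHomogeneousComponent hp_le hq_le hws]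

end LinearOrder

section LinearOrderedAddCommGroup

variable [AddCommGroup M] [LinearOrder M]

/-- The largest minus the smallest `w`-weight of a monomial of `p`, and `⊥` for `p = 0`. -/
noncomputable def weightSpread (w : σ → M) (p : MvPolynomial σ R) : WithBot M :=
  weightedTotalDegree' w p + weightedTotalDegree' (-w) p

theorem weightSpread_one [Nontrivial R] (w : σ → M) :
    weightSpread w (1 : MvPolynomial σ R) = 0 := by
  simp [weightSpread, weightedTotalDegree', support_one]

variable [IsOrderedAddMonoid M]

theorem weightSpread_mul [NoZeroDivisors R] (w : σ → M) (p q : MvPolynomial σ R) :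
    weightSpread w (p * q) = weightSpread w p + weightSpread w q := by
  simp only [weightSpread, weightedTotalDegree'_mul]
  exact add_add_add_comm _ _ _ _

theorem coe_weight_sub_le_weightSpread (w : σ → M) {p : MvPolynomial σ R} {a c : σ →₀ ℕ}
    (ha : a ∈ p.support) (hc : c ∈ p.support) :
    ((weight w a - weight w c : M) : WithBot M) ≤ weightSpread w p := by
  rw [sub_eq_add_neg, ← weight_neg, WithBot.coe_add]
  exact add_le_add (coe_weight_le_weightedTotalDegree' w ha)
    (coe_weight_le_weightedTotalDegree' (-w) hc)

theorem coe_weight_sub_add_weight_sub_le_weightSpread_mul [NoZeroDivisors R] (w : σ → M)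
    {p q : MvPolynomial σ R} {a c a' c' : σ →₀ ℕ} (ha : a ∈ p.support) (hc : c ∈ p.support)
    (ha' : a' ∈ q.support) (hc' : c' ∈ q.support) :
    ((weight w a - weight w c + (weight w a' - weight w c') : M) : WithBot M) ≤
      weightSpread w (p * q) := by
  rw [weightSpread_mul, WithBot.coe_add]
  exact add_le_add (coe_weight_sub_le_weightSpread w ha hc)
    (coe_weight_sub_le_weightSpread w ha' hc')

theorem weightSpread_monomial_add_monomial [Nontrivial R] (w : σ → M) {α β : σ →₀ ℕ}
    (hαβ : α ≠ β) :
    weightSpread w (monomial α (1 : R) + monomial β 1) = |weight w α - weight w β| := by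
  classical
  simp only [weightSpread, weightedTotalDegree', support_monomial_add_monomial hαβ,
    Finset.sup_insert, Finset.sup_singleton, weight_neg]
  rw [← WithBot.coe_max, ← WithBot.coe_max, ← WithBot.coe_add, max_neg_neg, ← sub_eq_add_neg,
    max_sub_min_eq_abs']

theorem weight_sub_add_weight_sub_le_of_mul_eq [NoZeroDivisors R] [Nontrivial R] (w : σ → M)
    {α β : σ →₀ ℕ} (hαβ : α ≠ β) {P Q : MvPolynomial σ R}
    (hPQ : P * Q = monomial α 1 + monomial β 1) {a c a' c' : σ →₀ ℕ} (ha : a ∈ P.support)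
    (hc : c ∈ P.support) (ha' : a' ∈ Q.support) (hc' : c' ∈ Q.support) :
    weight w a - weight w c + (weight w a' - weight w c') ≤ |weight w α - weight w β| := by
  have := coe_weight_sub_add_weight_sub_le_weightSpread_mul w ha hc ha' hc'
  rwa [hPQ, weightSpread_monomial_add_monomial w hαβ, WithBot.coe_le_coe] at this

end LinearOrderedAddCommGroup

section Binomial

variable {α β : σ →₀ ℕ}

theorem isUnit_of_mul_eq_monomial_add_monomial [Nontrivial R] (hαβ : α ≠ β) (hdisj : α ⊓ β = 0)
    {P Q : MvPolynomial σ R} (hPQ : P * Q = monomial α 1 + monomial β 1)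
    (hP : (P.support : Set (σ →₀ ℕ)).Subsingleton) : IsUnit P := by
  classical
  have hcoeff : ∀ γ ∈ ({α, β} : Finset _), coeff γ (P * Q) = 1 := by
    simp only [Finset.mem_insert, Finset.mem_singleton, forall_eq_or_imp, forall_eq, hPQ,
      coeff_add, coeff_monomial]
    simp [hαβ, hαβ.symm]
  have hP0 : P ≠ 0 := by
    rintro rfl
    simpa using hcoeff α (by simp)
  obtain ⟨u, hu⟩ := support_nonempty.2 hP0
  have hPu : P = monomial u (coeff u P) := by
    conv_lhs => rw [as_sum P, Finset.eq_singleton_iff_unique_mem.2 ⟨hu, fun v hv => hP hv hu⟩,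
      Finset.sum_singleton]
  have hdiv : ∀ γ ∈ ({α, β} : Finset _), u ≤ γ ∧ IsUnit (coeff u P) := by
    intro γ hγ
    have := hcoeff γ hγ
    rw [hPu, coeff_monomial_mul'] at this
    split_ifs at this with huγ
    · exact ⟨huγ, IsUnit.of_mul_eq_one _ this⟩
    · exact absurd this zero_ne_one
  have hu0 : u ≤ α ⊓ β := le_inf (hdiv α (by simp)).1 (hdiv β (by simp)).1
  rw [hdisj, nonpos_iff_eq_zero] at hu0
  subst hu0
  rw [hPu, monomial_zero']
  exact (hdiv α (by simp)).2.map C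

theorem not_isUnit_monomial_add_monomial [NoZeroDivisors R] [Nontrivial R] (hαβ : α ≠ β) :
    ¬IsUnit (monomial α (1 : R) + monomial β 1) := by
  classical
  intro hunit
  obtain ⟨G, hFG⟩ := isUnit_iff_exists_inv.1 hunit
  obtain ⟨c, hc⟩ := support_nonempty.2 (right_ne_zero_of_mul_eq_one hFG)
  obtain ⟨i, hi⟩ := DFunLike.ne_iff.1 hαβ
  have hα : α ∈ (monomial α (1 : R) + monomial β 1).support := by
    simp [support_monomial_add_monomial hαβ]
  have hβ : β ∈ (monomial α (1 : R) + monomial β 1).support := by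
    simp [support_monomial_add_monomial hαβ]
  -- In direction `e_i` the spread of `F * G = 1` is `0`, but `F` alone spreads by `|α i - β i|`.
  have h₁ := coe_weight_sub_add_weight_sub_le_weightSpread_mul (Pi.single i (1 : ℤ)) hα hβ hc hc
  have h₂ := coe_weight_sub_add_weight_sub_le_weightSpread_mul (Pi.single i (1 : ℤ)) hβ hα hc hc
  rw [hFG, weightSpread_one, ← WithBot.coe_zero, WithBot.coe_le_coe] at h₁ h₂
  simp only [weight_single_index, nsmul_one, sub_self, add_zero] at h₁ h₂
  omega

end Binomial

theorem prod_X_pow_eq_monomial_equivFunOnFinite [Fintype σ] (e : σ → ℕ) :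
    ∏ i, (X i : MvPolynomial σ R) ^ e i = monomial (equivFunOnFinite.symm e) 1 := by
  rw [monomial_eq, C_1, one_mul, Finsupp.prod_fintype _ _ fun _ => pow_zero _]
  rfl

section Primitive

variable [IsDomain R] [Fintype σ] {b g : σ → ℤ} {P Q : MvPolynomial σ R}

noncomputable def posPartExp (b : σ → ℤ) : σ →₀ ℕ := equivFunOnFinite.symm fun i => (b i).toNat

noncomputable def negPartExp (b : σ → ℤ) : σ →₀ ℕ := equivFunOnFinite.symm fun i => (-b i).toNat

theorem posPartExp_inf_negPartExp (b : σ → ℤ) : posPartExp b ⊓ negPartExp b = 0 := by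
  ext i
  simp only [posPartExp, negPartExp, Finsupp.inf_apply, equivFunOnFinite_symm_apply_apply,
    Finsupp.coe_zero, Pi.zero_apply]
  omega

theorem weight_posPartExp_sub_weight_negPartExp (w b : σ → ℤ) :
    weight w (posPartExp b) - weight w (negPartExp b) = w ⬝ᵥ b := by
  simp [weight_sub_weight_eq_dotProduct, posPartExp, negPartExp]

theorem posPartExp_ne_negPartExp (hb : b ≠ 0) : posPartExp b ≠ negPartExp b := by
  intro h
  refine hb (dotProduct_self_eq_zero.1 ?_)
  rw [← weight_posPartExp_sub_weight_negPartExp, h, sub_self]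

theorem exists_sub_eq_smul_of_mul_eq (hg : g ⬝ᵥ b = 1)
    (hPQ : P * Q = monomial (posPartExp b) 1 + monomial (negPartExp b) 1) {a c : σ →₀ ℕ}
    (ha : a ∈ P.support) (hc : c ∈ P.support) : ∃ k : ℤ, (fun i => (a i : ℤ) - c i) = k • b := by
  classical
  have hb : posPartExp b ≠ negPartExp b := posPartExp_ne_negPartExp (by rintro rfl; simp at hg)
  have hQ : Q ≠ 0 := by
    rintro rfl
    rw [mul_zero, eq_comm, ← support_eq_empty, support_monomial_add_monomial hb] at hPQ
    simp at hPQ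
  obtain ⟨c', hc'⟩ := support_nonempty.2 hQ
  refine ⟨_, eq_dotProduct_smul_of_forall_dotProduct_eq_zero hg fun w hw => ?_⟩
  have h₁ := weight_sub_add_weight_sub_le_of_mul_eq w hb hPQ ha hc hc' hc'
  have h₂ := weight_sub_add_weight_sub_le_of_mul_eq w hb hPQ hc ha hc' hc'
  rw [weight_posPartExp_sub_weight_negPartExp, hw, abs_zero, sub_self, add_zero] at h₁ h₂
  rw [← weight_sub_weight_eq_dotProduct]
  linarith

theorem exists_mem_support_dotProduct_self_le_weight_sub (hg : g ⬝ᵥ b = 1)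
    (hPQ : P * Q = monomial (posPartExp b) 1 + monomial (negPartExp b) 1) {a c : σ →₀ ℕ}
    (ha : a ∈ P.support) (hc : c ∈ P.support) (hac : a ≠ c) :
    ∃ a₀ ∈ P.support, ∃ c₀ ∈ P.support, b ⬝ᵥ b ≤ weight b a₀ - weight b c₀ := by
  obtain ⟨k, hk⟩ := exists_sub_eq_smul_of_mul_eq hg hPQ ha hc
  have hk0 : k ≠ 0 := by
    rintro rfl
    refine hac (Finsupp.ext fun i => ?_)
    have := congrFun hk i
    simp only [zero_smul, Pi.zero_apply] at this
    omega
  have hbb : 0 ≤ b ⬝ᵥ b := Finset.sum_nonneg fun i _ => mul_self_nonneg _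
  have key := weight_sub_weight_eq_dotProduct b a c
  rw [hk, dotProduct_smul, smul_eq_mul] at key
  rcases hk0.lt_or_gt with hneg | hpos
  · exact ⟨c, hc, a, ha, by nlinarith⟩
  · exact ⟨a, ha, c, hc, by nlinarith⟩

theorem support_subsingleton_or_of_mul_eq (hg : g ⬝ᵥ b = 1)
    (hPQ : P * Q = monomial (posPartExp b) 1 + monomial (negPartExp b) 1) :
    (P.support : Set (σ →₀ ℕ)).Subsingleton ∨ (Q.support : Set (σ →₀ ℕ)).Subsingleton := by
  have hb0 : b ≠ 0 := by rintro rfl; simp at hg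
  by_contra h
  rw [not_or, Set.not_subsingleton_iff, Set.not_subsingleton_iff] at h
  obtain ⟨⟨a, ha, c, hc, hac⟩, ⟨a', ha', c', hc', hac'⟩⟩ := h
  obtain ⟨a₀, ha₀, c₀, hc₀, hP⟩ :=
    exists_mem_support_dotProduct_self_le_weight_sub hg hPQ ha hc hac
  obtain ⟨a₁, ha₁, c₁, hc₁, hQ⟩ :=
    exists_mem_support_dotProduct_self_le_weight_sub hg (mul_comm Q P ▸ hPQ) ha' hc' hac'
  have hbb : 0 ≤ b ⬝ᵥ b := Finset.sum_nonneg fun i _ => mul_self_nonneg _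
  have hle := weight_sub_add_weight_sub_le_of_mul_eq b (posPartExp_ne_negPartExp hb0) hPQ
    ha₀ hc₀ ha₁ hc₁
  rw [weight_posPartExp_sub_weight_negPartExp, abs_of_nonneg hbb] at hle
  exact hb0 (dotProduct_self_eq_zero.1 (by linarith))

theorem irreducible_monomial_posPartExp_add_monomial_negPartExp (hg : g ⬝ᵥ b = 1) :
    Irreducible (monomial (posPartExp b) (1 : R) + monomial (negPartExp b) 1) := by
  have hb := posPartExp_ne_negPartExp (b := b) (by rintro rfl; simp at hg)
  have hdisj := posPartExp_inf_negPartExp b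
  refine ⟨not_isUnit_monomial_add_monomial hb, fun P Q hPQ => ?_⟩
  rcases support_subsingleton_or_of_mul_eq hg hPQ.symm with hP | hQ
  · exact .inl (isUnit_of_mul_eq_monomial_add_monomial hb hdisj hPQ.symm hP)
  · exact .inr (isUnit_of_mul_eq_monomial_add_monomial hb hdisj (mul_comm Q P ▸ hPQ.symm) hQ)

end Primitive

end CommSemiring

end MvPolynomial

open MvPolynomial in
theorem stmt1_general {m : ℕ} (b : Fin m → ℤ)
    (hgcd : Finset.gcd Finset.univ b = 1) :
    Irreducible ((∏ i, (X i : MvPolynomial (Fin m) ℤ) ^ (b i).toNat)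
      + ∏ i, (X i : MvPolynomial (Fin m) ℤ) ^ (-(b i)).toNat) := by
  obtain ⟨g, hg⟩ := Finset.gcd_eq_sum_mul Finset.univ b
  rw [prod_X_pow_eq_monomial_equivFunOnFinite, prod_X_pow_eq_monomial_equivFunOnFinite]
  refine irreducible_monomial_posPartExp_add_monomial_negPartExp (g := g) ?_
  simpa [dotProduct, mul_comm, hgcd] using hg.symm

open MvPolynomial in
/-- If `b ∈ ℤ^m` is a primitive integer vector (nonzero, gcd of entries 1), then the binomial
`∏_{b_i>0} x_i^{b_i} + ∏_{b_i<0} x_i^{-b_i}` is irreducible in `ℤ[x_1,…,x_m]`. -/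
theorem stmt1 {m : ℕ} (b : Fin m → ℤ) (hb : b ≠ 0)
    (hgcd : Finset.gcd Finset.univ b = 1) :
    Irreducible ((∏ i, (X i : MvPolynomial (Fin m) ℤ) ^ (b i).toNat)
      + ∏ i, (X i : MvPolynomial (Fin m) ℤ) ^ (-(b i)).toNat) :=
  stmt1_general b hgcd
end

section
/- For polynomials p, q in ℤ[x_1, …, x_m], the Newton polytope of the product pq equals the Minkowski sum of the Newton polytopes of p and q: N(pq) = N(p) + N(q). -/
/-!
`N(pq) ⊆ N(p) + N(q)` because every monomial of `pq` is a product of monomials of `p` and `q`.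
Conversely, with `A` and `B` the exponent sets of `p` and `q`, `N(p) + N(q)` is the convex hull
of the finite set `A + B`, so by Krein–Milman it is the convex hull of its vertices. A vertex
`a + b` can be written as a sum from `A + B` in only one way, so the coefficient of `x^(a+b)`
in `pq` is the single product `p_a q_b ≠ 0`, and every vertex is an exponent of `pq`.
-/

open Pointwise

/-- The Newton polytope of `p ∈ ℤ[x_1,…,x_m]`: the convex hull in `ℝ^m` of the exponent
vectors of the monomials appearing in `p`. -/
noncomputable def newtonPolytope {m : ℕ} (p : MvPolynomial (Fin m) ℤ) : Set (Fin m → ℝ) :=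
  convexHull ℝ ((fun d : Fin m →₀ ℕ => fun i => (d i : ℝ)) '' (p.support : Set (Fin m →₀ ℕ)))

/-- Another decomposition `a' + b'` would make `a + b` the midpoint of `a + b'` and `a' + b`. -/
theorem uniqueAdd_of_add_mem_extremePoints {𝕜 E : Type*} [Field 𝕜] [LinearOrder 𝕜]
    [IsStrictOrderedRing 𝕜] [AddCommGroup E] [Module 𝕜 E] {A B : Finset E} {S : Set E} {a b : E}
    (hA : a ∈ A) (hB : b ∈ B) (hS : (A : Set E) + B ⊆ S) (hab : a + b ∈ S.extremePoints 𝕜) :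
    UniqueAdd A B a b := by
  intro a' b' ha' hb' h
  have hmid : midpoint 𝕜 (a + b') (a' + b) = a + b := by
    rw [midpoint_eq_iff, AffineEquiv.pointReflection_apply, vsub_eq_sub, vadd_eq_add,
      eq_sub_of_add_eq h]
    abel
  obtain ⟨h₁, h₂⟩ := (mem_extremePoints.1 hab).2 _ (hS (Set.add_mem_add hA hb')) _
    (hS (Set.add_mem_add ha' hB)) (hmid ▸ midpoint_mem_openSegment _ _)
  exact ⟨add_right_cancel h₂, add_left_cancel h₁⟩

theorem Set.Finite.convexHull_subset_convexHull_of_extremePoints_subset {E : Type*}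
    [AddCommGroup E] [Module ℝ E] [TopologicalSpace E] [T2Space E] [IsTopologicalAddGroup E]
    [ContinuousSMul ℝ E] [LocallyConvexSpace ℝ E] {s t : Set E} (hs : s.Finite) (ht : t.Finite)
    (hst : (convexHull ℝ s).extremePoints ℝ ⊆ t) : convexHull ℝ s ⊆ convexHull ℝ t := by
  rw [← closure_convexHull_extremePoints (hs.isCompact_convexHull ℝ) (convex_convexHull ℝ s)]
  exact closure_minimal (convexHull_mono hst) (ht.isClosed_convexHull ℝ)

noncomputable def exponentVector (σ : Type*) : (σ →₀ ℕ) →+ (σ → ℝ) :=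
  AddMonoidHom.pi fun i => (Nat.castAddMonoidHom ℝ).comp (Finsupp.applyAddHom i)

theorem exponentVector_injective (σ : Type*) : Function.Injective (exponentVector σ) :=
  fun _ _ h => Finsupp.ext fun i => Nat.cast_injective (congrFun h i)

namespace MvPolynomial

variable {σ R : Type*} [CommSemiring R] [NoZeroDivisors R]

theorem add_mem_support_mul_of_uniqueAdd {p q : MvPolynomial σ R} {a b : σ →₀ ℕ}
    (ha : a ∈ p.support) (hb : b ∈ q.support) (h : UniqueAdd p.support q.support a b) :
    a + b ∈ (p * q).support := by
  rw [mem_support_iff] at *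
  rw [coeff, AddMonoidAlgebra.coeff_mul_add_of_uniqueAdd h]
  exact mul_ne_zero ha hb

theorem extremePoints_convexHull_exponentVector_add_subset (p q : MvPolynomial σ R) :
    (convexHull ℝ (exponentVector σ '' (p.support + q.support : Set (σ →₀ ℕ)))).extremePoints ℝ
      ⊆ exponentVector σ '' (p * q).support := by
  classical
  intro v hv
  obtain ⟨_, ⟨a, ha, b, hb, rfl⟩, rfl⟩ := extremePoints_convexHull_subset hv
  have hunique : UniqueAdd p.support q.support a b := by
    rw [← UniqueAdd.addHom_image_iff (exponentVector σ).toAddHom (exponentVector_injective σ)]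
    refine uniqueAdd_of_add_mem_extremePoints (Finset.mem_image_of_mem _ ha)
      (Finset.mem_image_of_mem _ hb) ?_ (by rwa [← map_add])
    rw [Finset.coe_image, Finset.coe_image, ← Set.image_add]
    exact subset_convexHull ℝ _
  exact ⟨a + b, add_mem_support_mul_of_uniqueAdd ha hb hunique, rfl⟩

theorem convexHull_exponentVector_support_mul (p q : MvPolynomial σ R) :
    convexHull ℝ (exponentVector σ '' (p * q).support) =
      convexHull ℝ (exponentVector σ '' p.support) +
        convexHull ℝ (exponentVector σ '' q.support) := by
  classical
  rw [← convexHull_add, ← Set.image_add]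
  refine subset_antisymm ?_ ?_
  · exact convexHull_mono (Set.image_mono (by exact_mod_cast support_mul p q))
  · exact Set.Finite.convexHull_subset_convexHull_of_extremePoints_subset
      ((p.support.finite_toSet.add q.support.finite_toSet).image _)
      ((p * q).support.finite_toSet.image _)
      (extremePoints_convexHull_exponentVector_add_subset p q)

end MvPolynomial

theorem stmt2_general {m : ℕ} (p q : MvPolynomial (Fin m) ℤ) :
    newtonPolytope (p * q) = newtonPolytope p + newtonPolytope q :=
  MvPolynomial.convexHull_exponentVector_support_mul p q

/-- For nonzero polynomials `p, q ∈ ℤ[x_1,…,x_m]`, the Newton polytope of the product is the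
Minkowski sum of the Newton polytopes: `N(pq) = N(p) + N(q)`. -/
theorem stmt2 {m : ℕ} (p q : MvPolynomial (Fin m) ℤ) (hp : p ≠ 0) (hq : q ≠ 0) :
    newtonPolytope (p * q) = newtonPolytope p + newtonPolytope q :=
  stmt2_general p q
end

section
/- Let B̃ = (b_{kj}) be an m × n integer matrix whose top n × n submatrix is skew-symmetrizable, and let B̃' = μ_i(B̃) be the matrix obtained by matrix mutation at index i ∈ [n], defined by b'_{kj} = −b_{kj} if k = i or j = i, and b'_{kj} = b_{kj} + (|b_{ki}|·b_{ij} + b_{ki}·|b_{ij}|)/2 otherwise. If every column of B̃ is a primitive integer vector, then every column of B̃' is a primitive integer vector. -/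
/-!
Away from the mutation index, mutation adds to each entry of column `j` a multiple of the pivot
entry `b_ij`, and it negates `b_ij` itself. So every common divisor of the new column divides
`b_ij`, hence every entry of the old column, hence the old gcd `1`.
-/

lemma Finset.gcd_eq_one_of_forall_dvd_imp_dvd {ι α : Type*} [CommMonoidWithZero α]
    [NormalizedGCDMonoid α] {s : Finset ι} {u v : ι → α} (hu : s.gcd u = 1)
    (h : ∀ d, (∀ k ∈ s, d ∣ v k) → ∀ k ∈ s, d ∣ u k) : s.gcd v = 1 := by
  rw [← Finset.normalize_gcd, normalize_eq_one]
  apply isUnit_of_dvd_one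
  rw [← hu]
  exact Finset.dvd_gcd (h _ fun k hk => Finset.gcd_dvd hk)

lemma Int.dvd_abs_mul_add_mul_abs_div_two (a c : ℤ) : c ∣ (|a| * c + a * |c|) / 2 := by
  obtain ⟨y, hy, hcy⟩ : ∃ y, |a| * c + a * |c| = 2 * y ∧ c ∣ y := by
    rcases abs_cases a with ⟨ha, _⟩ | ⟨ha, _⟩ <;> rcases abs_cases c with ⟨hc, _⟩ | ⟨hc, _⟩
    · exact ⟨a * c, by rw [ha, hc]; ring, dvd_mul_left _ _⟩
    · exact ⟨0, by rw [ha, hc]; ring, dvd_zero _⟩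
    · exact ⟨0, by rw [ha, hc]; ring, dvd_zero _⟩
    · exact ⟨-(a * c), by rw [ha, hc]; ring, (dvd_mul_left _ _).neg_right⟩
  rwa [hy, Int.mul_ediv_cancel_left _ two_ne_zero]

lemma Int.dvd_of_forall_dvd_mutatedColumn {ι : Type*} [DecidableEq ι] (v a : ι → ℤ) (p : ι)
    {d : ℤ} (hd : ∀ k, d ∣ if k = p then -v k else v k + (|a k| * v p + a k * |v p|) / 2)
    (k : ι) : d ∣ v k := by
  have hp : d ∣ v p := by simpa using hd p
  by_cases hk : k = p
  · exact hk ▸ hp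
  · have hdk := hd k
    rw [if_neg hk] at hdk
    simpa using hdk.sub (hp.trans (dvd_abs_mul_add_mul_abs_div_two (a k) (v p)))

theorem stmt4_general {m n : ℕ} (hmn : n ≤ m) (B : Matrix (Fin m) (Fin n) ℤ) (i : Fin n)
    (hprim : ∀ j : Fin n, Finset.gcd Finset.univ (fun k => B k j) = 1) :
    ∀ j : Fin n, Finset.gcd Finset.univ
      (fun k : Fin m => if k = Fin.castLE hmn i ∨ j = i then - B k j
        else B k j + (|B k i| * B (Fin.castLE hmn i) j + B k i * |B (Fin.castLE hmn i) j|) / 2)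
      = 1 := by
  intro j
  refine Finset.gcd_eq_one_of_forall_dvd_imp_dvd (hprim j) fun d hd k _ => ?_
  by_cases hj : j = i
  · simpa [hj] using hd k (Finset.mem_univ k)
  · exact Int.dvd_of_forall_dvd_mutatedColumn (B · j) (B · i) (Fin.castLE hmn i)
      (fun k => by simpa [hj] using hd k (Finset.mem_univ k)) k

/-- Matrix mutation preserves primitivity of columns: if `B̃` is an `m × n` integer matrix whose
top `n × n` submatrix is skew-symmetrizable and all of whose columns are primitive (gcd of the
entries equal to 1), then all columns of the mutated matrix `μ_i(B̃)` are primitive. -/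
theorem stmt4 {m n : ℕ} (hmn : n ≤ m) (B : Matrix (Fin m) (Fin n) ℤ) (i : Fin n)
    (D : Fin n → ℤ) (hD : ∀ k, 0 < D k)
    (hskew : ∀ k j : Fin n, D k * B (Fin.castLE hmn k) j = - (D j * B (Fin.castLE hmn j) k))
    (hprim : ∀ j : Fin n, Finset.gcd Finset.univ (fun k => B k j) = 1) :
    ∀ j : Fin n, Finset.gcd Finset.univ
      (fun k : Fin m => if k = Fin.castLE hmn i ∨ j = i then - B k j
        else B k j + (|B k i| * B (Fin.castLE hmn i) j + B k i * |B (Fin.castLE hmn i) j|) / 2)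
      = 1 :=
  stmt4_general hmn B i hprim
end

section
/- In the field ℚ(x, y), define z = (A·y + B·E)/x, u = (D·z + C·B)/y, t = (E·u + A·C)/z, where A, B, C, D, E are fixed nonzero rational constants (or indeterminates over ℚ). Then t = (C·x + E·D)/y. Consequently the rank-two LP mutation sequence with seed {(x, Ay+BE), (y, Cx+DE)} has period five in the cluster variables: the sequence x, y, z, u, t, x, y, … repeats. -/
/-!
After clearing denominators each identity is a polynomial identity, so the pentagon relations
hold in any field once the denominators that occur are nonzero. In `ℚ(A, B, C, D, E)(x, y)`
those denominators are images of nonzero polynomials: each evaluates to `2` or `3` when all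
the variables are set to `1`.
-/

theorem rankTwoLP_pentagon {K : Type*} [Field K] {A B C D E x y : K} (hx : x ≠ 0) (hy : y ≠ 0)
    (hz : A * y + B * E ≠ 0) (hu : D * (A * y + B * E) + C * B * x ≠ 0)
    (hw : C * x + E * D ≠ 0) :
    let z := (A * y + B * E) / x
    let u := (D * z + C * B) / y
    let t := (E * u + A * C) / z
    t = (C * x + E * D) / y ∧ (B * t + A * D) / u = x ∧ (C * x + E * D) / t = y := by
  intro z u t
  have hz_ne : z ≠ 0 := div_ne_zero hz hx
  have hu_eq : u = (D * (A * y + B * E) + C * B * x) / (x * y) := by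
    simp only [u, z]
    field_simp
  have ht_eq : t = (C * x + E * D) / y := by
    have : E * u + A * C = z * (C * x + E * D) / y := by
      simp only [hu_eq, z]
      field_simp
      ring
    calc t = z * (C * x + E * D) / y / z := by rw [← this]
      _ = (C * x + E * D) / y := by rw [mul_div_assoc, mul_div_cancel_left₀ _ hz_ne]
  have hv_eq : B * t + A * D = (D * (A * y + B * E) + C * B * x) / y := by
    rw [ht_eq]
    field_simp
    ring
  refine ⟨ht_eq, ?_, ?_⟩
  · rw [hv_eq, hu_eq, div_div_div_cancel_left' _ _ hu, mul_div_cancel_right₀ _ hy]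
  · rw [ht_eq, div_div_cancel₀ hw]

theorem MvPolynomial.algebraMap_ne_zero_of_eval_ne_zero {σ R K : Type*} [CommRing R]
    [CommRing K] [Algebra (MvPolynomial σ R) K] [IsFractionRing (MvPolynomial σ R) K]
    {p : MvPolynomial σ R} (v : σ → R) (h : eval v p ≠ 0) :
    algebraMap (MvPolynomial σ R) K p ≠ 0 :=
  (map_ne_zero_iff _ (IsFractionRing.injective _ K)).mpr (by rintro rfl; exact h (map_zero _))

open MvPolynomial in
/-- Pentagon identity for the rank-two `(b,c) = (1,1)` LP algebra of finite type.  In the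
field `ℚ(A,B,C,D,E)(x,y)` of rational functions, with `z = (Ay+BE)/x`, `u = (Dz+CB)/y`,
`t = (Eu+AC)/z`, one has `t = (Cx+ED)/y`; consequently the mutation sequence has period five:
the next two cluster variables `(Bt+AD)/u` and `(Cx+ED)/t` are `x` and `y` again. -/
theorem stmt6 :
    let f := algebraMap (MvPolynomial (Fin 7) ℚ) (FractionRing (MvPolynomial (Fin 7) ℚ))
    let A := f (X 0)
    let B := f (X 1)
    let C := f (X 2)
    let D := f (X 3)
    let E := f (X 4)
    let x := f (X 5)
    let y := f (X 6)
    let z := (A * y + B * E) / x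
    let u := (D * z + C * B) / y
    let t := (E * u + A * C) / z
    t = (C * x + E * D) / y ∧ (B * t + A * D) / u = x ∧ (C * x + E * D) / t = y := by
  have hf (p : MvPolynomial (Fin 7) ℚ) (h : eval (fun _ ↦ 1) p ≠ 0) :
      algebraMap _ (FractionRing (MvPolynomial (Fin 7) ℚ)) p ≠ 0 :=
    algebraMap_ne_zero_of_eval_ne_zero _ h
  refine rankTwoLP_pentagon (hf (X 5) (by simp)) (hf (X 6) (by simp)) ?_ ?_ ?_ <;>
    simp only [← map_mul, ← map_add] <;> exact hf _ (by norm_num)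
end

section
/- In the field ℚ(A,B,C,D,E,F,G)(x,y) of rational functions, define the mutation sequence z = (A·y² + B·G·y + C·F·G²)/x, u = (E·z + C·D·G)/y, v = (F·u² + B·D·u + A·C·D²)/z, t = (G·v + E·A·D)/u, x' = (C·t² + B·E·t + F·A·E²)/v, y' = (D·x' + G·F·E)/t. Then x' = x and y' = y; i.e., the sequence of cluster variables has period six. -/
/-!
Every cluster variable of the sequence is a Laurent polynomial in `x, y`: with
`N₁ = Ay² + BGy + CFG²`, `N₂ = E N₁ + CDGx` and `w = Dx + EFG` one finds
`z = N₁/x`, `u = N₂/(xy)`, `v = (AE²Fy² + BEwy + Cw²)/(xy²)` and `t = w/y`, after which the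
last two exchange relations collapse to `x` and `y`. This identity holds in any field where the
numerators do not vanish, and over `ℚ[A, …, G, x, y]` they do not, as they are nonzero at the
point with all coordinates `1`.
-/

theorem hexagon_period_six {K : Type*} [Field K] {A B C D E F G x y : K}
    (hx : x ≠ 0) (hy : y ≠ 0)
    (h₁ : A * y ^ 2 + B * G * y + C * F * G ^ 2 ≠ 0)
    (h₂ : E * (A * y ^ 2 + B * G * y + C * F * G ^ 2) + C * D * G * x ≠ 0)
    (hw : D * x + E * F * G ≠ 0)
    (h₃ : A * E ^ 2 * F * y ^ 2 + B * E * (D * x + E * F * G) * y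
      + C * (D * x + E * F * G) ^ 2 ≠ 0) :
    let z := (A * y ^ 2 + B * G * y + C * F * G ^ 2) / x
    let u := (E * z + C * D * G) / y
    let v := (F * u ^ 2 + B * D * u + A * C * D ^ 2) / z
    let t := (G * v + E * A * D) / u
    let x' := (C * t ^ 2 + B * E * t + F * A * E ^ 2) / v
    let y' := (D * x' + G * F * E) / t
    x' = x ∧ y' = y := by
  intro z u v t x' y'
  set N₁ := A * y ^ 2 + B * G * y + C * F * G ^ 2
  set N₂ := E * N₁ + C * D * G * x
  set w := D * x + E * F * G
  set N₃ := A * E ^ 2 * F * y ^ 2 + B * E * w * y + C * w ^ 2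
  have hu : u = N₂ / (x * y) := by
    simp only [u, z, N₂, N₁]; field_simp
  have hv : v = N₃ / (x * y ^ 2) := by
    simp only [v, hu, z]
    rw [div_eq_div_iff (div_ne_zero h₁ hx) (by positivity)]
    field_simp; ring
  have ht : t = w / y := by
    simp only [t, hv, hu]
    rw [div_eq_div_iff (div_ne_zero h₂ (mul_ne_zero hx hy)) hy]
    field_simp; ring
  have hx' : x' = x := by
    simp only [x', ht, hv]
    rw [div_eq_iff (div_ne_zero h₃ (by positivity))]
    field_simp; ring
  refine ⟨hx', ?_⟩
  simp only [y', hx', ht]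
  rw [div_div_eq_mul_div, div_eq_iff hw]
  ring

theorem IsFractionRing.algebraMap_ne_zero_of_map_ne_zero {R S K : Type*} [CommRing R]
    [CommRing K] [Algebra R K] [IsFractionRing R K] [Semiring S] (φ : R →+* S) {p : R}
    (hp : φ p ≠ 0) : algebraMap R K p ≠ 0 :=
  (map_ne_zero_iff _ (IsFractionRing.injective R K)).2 fun h => hp (by rw [h, map_zero])

open MvPolynomial in
/-- Hexagon identity for the rank-two `(b,c) = (1,2)` LP algebra of finite type.  In the field
`ℚ(A,B,C,D,E,F,G)(x,y)`, the mutation sequence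
`z = (Ay²+BGy+CFG²)/x`, `u = (Ez+CDG)/y`, `v = (Fu²+BDu+ACD²)/z`, `t = (Gv+EAD)/u`,
`x' = (Ct²+BEt+FAE²)/v`, `y' = (Dx'+GFE)/t` returns to the start: `x' = x` and `y' = y`. -/
theorem stmt7 :
    let f := algebraMap (MvPolynomial (Fin 9) ℚ) (FractionRing (MvPolynomial (Fin 9) ℚ))
    let A := f (X 0)
    let B := f (X 1)
    let C := f (X 2)
    let D := f (X 3)
    let E := f (X 4)
    let F := f (X 5)
    let G := f (X 6)
    let x := f (X 7)
    let y := f (X 8)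
    let z := (A * y ^ 2 + B * G * y + C * F * G ^ 2) / x
    let u := (E * z + C * D * G) / y
    let v := (F * u ^ 2 + B * D * u + A * C * D ^ 2) / z
    let t := (G * v + E * A * D) / u
    let x' := (C * t ^ 2 + B * E * t + F * A * E ^ 2) / v
    let y' := (D * x' + G * F * E) / t
    x' = x ∧ y' = y := by
  intro f A B C D E F G x y
  refine hexagon_period_six ?_ ?_ ?_ ?_ ?_ ?_ <;>
    simp only [A, B, C, D, E, F, G, x, y, ← map_mul, ← map_pow, ← map_add] <;>
    exact IsFractionRing.algebraMap_ne_zero_of_map_ne_zero (eval fun _ => 1) (by norm_num)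
end

section
/- In the field ℚ(A,B,C,D,E,F,G,H,K,L)(x,y) of rational functions, the rank-two LP mutation sequence starting from the seed {(x, A y³ + B K L y² + C H K² L² y + D G H² K³ L³), (y, E x + F G H K L²)} has period eight: after eight mutations, defined successively by x_{m+1} = F_m(x_m)/x_{m−1} with the exchange polynomials obtained by the cyclic permutation (D G)(E F)(K L) followed by (A D)(B C)(F K)(G H) of coefficients at alternating steps, one returns to the original pair of cluster variables (x, y). -/
/-!
The Laurent phenomenon made explicit: the cluster variables are
`x₃ = num3 / x`, `x₄ = num4 / (x y)`, `x₅ = num5 / (x² y³)`, `x₆ = num6 / (x y²)`,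
`x₇ = num7 / (x y³)`, `x₈ = num8 / y` for polynomial numerators `numᵢ`, each exchange relation
being checked by clearing denominators, and the last two exchanges return `x` and `y`. This holds
in any field in which the numerators do not vanish; in `ℚ(A,…,L)(x,y)` they are nonzero
polynomials, as their value at the all-ones point is positive.
-/

namespace LPOctagon

section Numerators

variable {R : Type*} [CommRing R] (A B C D E F G H K L x y : R)

def num3 : R :=
  A * y ^ 3 + B * K * L * y ^ 2 + C * H * K ^ 2 * L ^ 2 * y + D * G * H ^ 2 * K ^ 3 * L ^ 3

def num4 : R :=
  A * F * y ^ 3 + B * F * K * L * y ^ 2 + C * F * H * K ^ 2 * L ^ 2 * y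
    + D * E * H * K ^ 2 * L * x + D * F * G * H ^ 2 * K ^ 3 * L ^ 3

def num5 : R :=
  A ^ 2 * F ^ 3 * G * y ^ 6 + 2 * A * B * F ^ 3 * G * K * L * y ^ 5
    + A * C * E * F ^ 2 * K * x * y ^ 4 + 2 * A * C * F ^ 3 * G * H * K ^ 2 * L ^ 2 * y ^ 4
    + 3 * A * D * E * F ^ 2 * G * H * K ^ 2 * L * x * y ^ 3
    + 2 * A * D * F ^ 3 * G ^ 2 * H ^ 2 * K ^ 3 * L ^ 3 * y ^ 3
    + B ^ 2 * F ^ 3 * G * K ^ 2 * L ^ 2 * y ^ 4 + B * C * E * F ^ 2 * K ^ 2 * L * x * y ^ 3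
    + 2 * B * C * F ^ 3 * G * H * K ^ 3 * L ^ 3 * y ^ 3 + B * D * E ^ 2 * F * K ^ 2 * x ^ 2 * y ^ 2
    + 3 * B * D * E * F ^ 2 * G * H * K ^ 3 * L ^ 2 * x * y ^ 2
    + 2 * B * D * F ^ 3 * G ^ 2 * H ^ 2 * K ^ 4 * L ^ 4 * y ^ 2
    + C ^ 2 * E * F ^ 2 * H * K ^ 3 * L ^ 2 * x * y ^ 2
    + C ^ 2 * F ^ 3 * G * H ^ 2 * K ^ 4 * L ^ 4 * y ^ 2
    + 2 * C * D * E ^ 2 * F * H * K ^ 3 * L * x ^ 2 * y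
    + 4 * C * D * E * F ^ 2 * G * H ^ 2 * K ^ 4 * L ^ 3 * x * y
    + 2 * C * D * F ^ 3 * G ^ 2 * H ^ 3 * K ^ 5 * L ^ 5 * y + D ^ 2 * E ^ 3 * H * K ^ 3 * x ^ 3
    + 3 * D ^ 2 * E ^ 2 * F * G * H ^ 2 * K ^ 4 * L ^ 2 * x ^ 2
    + 3 * D ^ 2 * E * F ^ 2 * G ^ 2 * H ^ 3 * K ^ 5 * L ^ 4 * x
    + D ^ 2 * F ^ 3 * G ^ 3 * H ^ 4 * K ^ 6 * L ^ 6

def num8 : R := E * x + F * G * H * K * L ^ 2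

def num6 : R :=
  A * F ^ 2 * G * L * y ^ 3 + B * F ^ 2 * G * K * L ^ 2 * y ^ 2
    + C * F * K * L * num8 E F G H K L x * y + D * K * num8 E F G H K L x ^ 2

def num7 : R :=
  A * F ^ 3 * G ^ 2 * H * L ^ 3 * y ^ 3 + B * F ^ 2 * G * L ^ 2 * num8 E F G H K L x * y ^ 2
    + C * F * L * num8 E F G H K L x ^ 2 * y + D * num8 E F G H K L x ^ 3

variable {S : Type*} [CommRing S] (φ : R →+* S)

theorem map_num3 :
    φ (num3 A B C D G H K L y) = num3 (φ A) (φ B) (φ C) (φ D) (φ G) (φ H) (φ K) (φ L) (φ y) := by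
  simp [num3]

theorem map_num4 : φ (num4 A B C D E F G H K L x y)
    = num4 (φ A) (φ B) (φ C) (φ D) (φ E) (φ F) (φ G) (φ H) (φ K) (φ L) (φ x) (φ y) := by
  simp [num4]

theorem map_num5 : φ (num5 A B C D E F G H K L x y)
    = num5 (φ A) (φ B) (φ C) (φ D) (φ E) (φ F) (φ G) (φ H) (φ K) (φ L) (φ x) (φ y) := by
  simp [num5, map_ofNat]

theorem map_num6 : φ (num6 A B C D E F G H K L x y)
    = num6 (φ A) (φ B) (φ C) (φ D) (φ E) (φ F) (φ G) (φ H) (φ K) (φ L) (φ x) (φ y) := by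
  simp [num6, num8]

theorem map_num7 : φ (num7 A B C D E F G H K L x y)
    = num7 (φ A) (φ B) (φ C) (φ D) (φ E) (φ F) (φ G) (φ H) (φ K) (φ L) (φ x) (φ y) := by
  simp [num7, num8]

theorem map_num8 :
    φ (num8 E F G H K L x) = num8 (φ E) (φ F) (φ G) (φ H) (φ K) (φ L) (φ x) := by
  simp [num8]

end Numerators

section Mutations

variable {𝕂 : Type*} [Field 𝕂] {A B C D E F G H K L x y : 𝕂}

theorem mutation_x4 {x3 : 𝕂} (hx : x ≠ 0) (e3 : x3 = num3 A B C D G H K L y / x) :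
    (F * x3 + E * D * H * L * K ^ 2) / y = num4 A B C D E F G H K L x y / (x * y) := by
  subst e3
  field_simp
  simp only [num3, num4]
  ring

theorem mutation_x5 {x3 x4 : 𝕂} (hx : x ≠ 0) (hy : y ≠ 0)
    (h3 : num3 A B C D G H K L y ≠ 0)
    (e3 : x3 = num3 A B C D G H K L y / x) (e4 : x4 = num4 A B C D E F G H K L x y / (x * y)) :
    (G * x4 ^ 3 + C * E * K * x4 ^ 2 + B * D * E ^ 2 * K ^ 2 * x4 + A * H * D ^ 2 * E ^ 3 * K ^ 3)
      / x3 = num5 A B C D E F G H K L x y / (x ^ 2 * y ^ 3) := by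
  subst e3 e4
  field_simp
  simp only [num3, num4, num5]
  ring

theorem mutation_x6 {x4 x5 : 𝕂} (hx : x ≠ 0) (hy : y ≠ 0)
    (h4 : num4 A B C D E F G H K L x y ≠ 0)
    (e4 : x4 = num4 A B C D E F G H K L x y / (x * y))
    (e5 : x5 = num5 A B C D E F G H K L x y / (x ^ 2 * y ^ 3)) :
    (L * x5 + F * A * D * K * E ^ 2) / x4 = num6 A B C D E F G H K L x y / (x * y ^ 2) := by
  subst e4 e5
  field_simp
  simp only [num4, num5, num6, num8]
  ring

theorem mutation_x7 {x5 x6 : 𝕂} (hx : x ≠ 0) (hy : y ≠ 0)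
    (h5 : num5 A B C D E F G H K L x y ≠ 0)
    (e5 : x5 = num5 A B C D E F G H K L x y / (x ^ 2 * y ^ 3))
    (e6 : x6 = num6 A B C D E F G H K L x y / (x * y ^ 2)) :
    (H * x6 ^ 3 + B * F * E * x6 ^ 2 + C * A * F ^ 2 * E ^ 2 * x6 + G * D * A ^ 2 * F ^ 3 * E ^ 3)
      / x5 = num7 A B C D E F G H K L x y / (x * y ^ 3) := by
  subst e5 e6
  field_simp
  simp only [num5, num6, num7, num8]
  ring

theorem mutation_x8 {x6 x7 : 𝕂} (hx : x ≠ 0) (hy : y ≠ 0)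
    (h6 : num6 A B C D E F G H K L x y ≠ 0)
    (e6 : x6 = num6 A B C D E F G H K L x y / (x * y ^ 2))
    (e7 : x7 = num7 A B C D E F G H K L x y / (x * y ^ 3)) :
    (K * x7 + L * G * A * E * F ^ 2) / x6 = num8 E F G H K L x / y := by
  subst e6 e7
  field_simp
  simp only [num6, num7, num8]
  ring

theorem mutation_x9 {x7 x8 : 𝕂} (hy : y ≠ 0) (h7 : num7 A B C D E F G H K L x y ≠ 0)
    (e7 : x7 = num7 A B C D E F G H K L x y / (x * y ^ 3)) (e8 : x8 = num8 E F G H K L x / y) :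
    (D * x8 ^ 3 + C * L * F * x8 ^ 2 + B * G * L ^ 2 * F ^ 2 * x8 + H * A * G ^ 2 * L ^ 3 * F ^ 3)
      / x7 = x := by
  subst e7 e8
  field_simp
  simp only [num7, num8]
  ring

theorem mutation_x10 {x8 x9 : 𝕂} (h8 : num8 E F G H K L x ≠ 0)
    (e8 : x8 = num8 E F G H K L x / y) (e9 : x9 = x) :
    (E * x9 + K * H * G * F * L ^ 2) / x8 = y := by
  subst e8 e9
  field_simp
  simp only [num8]
  ring

end Mutations

theorem octagon_period {𝕂 : Type*} [Field 𝕂] (A B C D E F G H K L x y : 𝕂)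
    (hx : x ≠ 0) (hy : y ≠ 0) (h3 : num3 A B C D G H K L y ≠ 0)
    (h4 : num4 A B C D E F G H K L x y ≠ 0)
    (h5 : num5 A B C D E F G H K L x y ≠ 0) (h6 : num6 A B C D E F G H K L x y ≠ 0)
    (h7 : num7 A B C D E F G H K L x y ≠ 0) (h8 : num8 E F G H K L x ≠ 0) :
    let x3 := (A * y ^ 3 + B * K * L * y ^ 2 + C * H * K ^ 2 * L ^ 2 * y
      + D * G * H ^ 2 * K ^ 3 * L ^ 3) / x
    let x4 := (F * x3 + E * D * H * L * K ^ 2) / y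
    let x5 := (G * x4 ^ 3 + C * E * K * x4 ^ 2 + B * D * E ^ 2 * K ^ 2 * x4
      + A * H * D ^ 2 * E ^ 3 * K ^ 3) / x3
    let x6 := (L * x5 + F * A * D * K * E ^ 2) / x4
    let x7 := (H * x6 ^ 3 + B * F * E * x6 ^ 2 + C * A * F ^ 2 * E ^ 2 * x6
      + G * D * A ^ 2 * F ^ 3 * E ^ 3) / x5
    let x8 := (K * x7 + L * G * A * E * F ^ 2) / x6
    let x9 := (D * x8 ^ 3 + C * L * F * x8 ^ 2 + B * G * L ^ 2 * F ^ 2 * x8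
      + H * A * G ^ 2 * L ^ 3 * F ^ 3) / x7
    let x10 := (E * x9 + K * H * G * F * L ^ 2) / x8
    x9 = x ∧ x10 = y := by
  intro x3 x4 x5 x6 x7 x8 x9 x10
  have e3 : x3 = num3 A B C D G H K L y / x := rfl
  have e4 : x4 = _ := mutation_x4 hx e3
  have e5 : x5 = _ := mutation_x5 hx hy h3 e3 e4
  have e6 : x6 = _ := mutation_x6 hx hy h4 e4 e5
  have e7 : x7 = _ := mutation_x7 hx hy h5 e5 e6
  have e8 : x8 = _ := mutation_x8 hx hy h6 e6 e7
  have e9 : x9 = x := mutation_x9 hy h7 e7 e8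
  exact ⟨e9, mutation_x10 h8 e8 e9⟩

end LPOctagon

open LPOctagon

open MvPolynomial in
/-- Octagon identity for the rank-two `(b,c) = (1,3)` LP algebra of finite type.  In the field
`ℚ(A,B,C,D,E,F,G,H,K,L)(x,y)`, the rank-two LP mutation sequence starting from the seed
`{(x, Ay³+BKLy²+CHK²L²y+DGH²K³L³), (y, Ex+FGHKL²)}` has period eight: with
`x₁ = x, x₂ = y` and `x₃,…,x₈` as displayed, one has
`x₉ = (Dx₈³+CLFx₈²+BGL²F²x₈+HAG²L³F³)/x₇ = x` and `x₁₀ = (Ex₉+KHGFL²)/x₈ = y`. -/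
theorem stmt8 :
    let f := algebraMap (MvPolynomial (Fin 12) ℚ) (FractionRing (MvPolynomial (Fin 12) ℚ))
    let A := f (X 0)
    let B := f (X 1)
    let C := f (X 2)
    let D := f (X 3)
    let E := f (X 4)
    let F := f (X 5)
    let G := f (X 6)
    let H := f (X 7)
    let K := f (X 8)
    let L := f (X 9)
    let x := f (X 10)
    let y := f (X 11)
    let x3 := (A * y ^ 3 + B * K * L * y ^ 2 + C * H * K ^ 2 * L ^ 2 * y
      + D * G * H ^ 2 * K ^ 3 * L ^ 3) / x
    let x4 := (F * x3 + E * D * H * L * K ^ 2) / y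
    let x5 := (G * x4 ^ 3 + C * E * K * x4 ^ 2 + B * D * E ^ 2 * K ^ 2 * x4
      + A * H * D ^ 2 * E ^ 3 * K ^ 3) / x3
    let x6 := (L * x5 + F * A * D * K * E ^ 2) / x4
    let x7 := (H * x6 ^ 3 + B * F * E * x6 ^ 2 + C * A * F ^ 2 * E ^ 2 * x6
      + G * D * A ^ 2 * F ^ 3 * E ^ 3) / x5
    let x8 := (K * x7 + L * G * A * E * F ^ 2) / x6
    let x9 := (D * x8 ^ 3 + C * L * F * x8 ^ 2 + B * G * L ^ 2 * F ^ 2 * x8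
      + H * A * G ^ 2 * L ^ 3 * F ^ 3) / x7
    let x10 := (E * x9 + K * H * G * F * L ^ 2) / x8
    x9 = x ∧ x10 = y := by
  intro f
  have generic : ∀ p : MvPolynomial (Fin 12) ℚ, eval (fun _ => 1) p ≠ 0 → f p ≠ 0 :=
    fun p hp => (map_ne_zero_iff f (IsFractionRing.injective _ _)).2 (ne_of_apply_ne _ (by simpa))
  exact octagon_period _ _ _ _ _ _ _ _ _ _ _ _ (generic _ (by simp)) (generic _ (by simp))
    (by rw [← map_num3]; exact generic _ (by norm_num [num3]))
    (by rw [← map_num4]; exact generic _ (by norm_num [num4]))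
    (by rw [← map_num5]; exact generic _ (by norm_num [num5]))
    (by rw [← map_num6]; exact generic _ (by norm_num [num6, num8]))
    (by rw [← map_num7]; exact generic _ (by norm_num [num7, num8]))
    (by rw [← map_num8]; exact generic _ (by norm_num [num8]))
end

section
/- Coprimality in the caterpillar setup (rank two version): let S be a UFD, P(y), Q(x) irreducible polynomials over S not divisible by y (resp. x), with P not associate to Q, and suppose P depends on y and Q depends on x. In L = S[x^{±1}, y^{±1}], set z = P(y)/x and u = Q(z)/y (assuming Q(z)/y ∈ L). Then gcd(z, u) = 1 in L, i.e., any common divisor of z and u in L is a unit. -/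
/-!
Write `L = R[x^{±1}]` with `R = S[y^{±1}]`. Since `z·x = P(y)` is a nonzero constant of `L` over
`R`, any divisor `w` of `z` is a monomial `c·x^n` with `c ∈ R` (degree and trailing degree add in
`R[x]`). As `u·y = Q(z) ≡ Q(0) mod z`, also `w ∣ Q(0)`, so `c` divides both `P(y)` and the
nonzero constant `Q(0) ∈ S`; hence `c = s·y^k` with `s ∈ S` dividing every coefficient of
`P`. An irreducible polynomial of positive degree is primitive, so `s`, and therefore `w`, is a
unit.
-/

open scoped Polynomial LaurentPolynomial

namespace Polynomial

variable {R : Type*}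

theorem eq_C_mul_X_pow_of_natTrailingDegree_eq_natDegree [Semiring R] {f : R[X]}
    (h : f.natTrailingDegree = f.natDegree) : f = C f.leadingCoeff * X ^ f.natDegree := by
  ext n
  rw [coeff_C_mul_X_pow]
  split_ifs with hn
  · rw [hn, leadingCoeff]
  · rcases Nat.lt_or_gt_of_ne hn with hlt | hgt
    · exact coeff_eq_zero_of_lt_natTrailingDegree (h ▸ hlt)
    · exact coeff_eq_zero_of_natDegree_lt hgt

theorem exists_eq_C_mul_X_pow_of_dvd_C_mul_X_pow [Semiring R] [NoZeroDivisors R] {f : R[X]}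
    {p : R} {N : ℕ} (hp : p ≠ 0) (h : f ∣ C p * X ^ N) :
    ∃ (c : R) (k : ℕ), f = C c * X ^ k := by
  obtain ⟨g, hfg⟩ := h
  rw [C_mul_X_pow_eq_monomial] at hfg
  have hf : f ≠ 0 := by rintro rfl; simp_all
  have hg : g ≠ 0 := by rintro rfl; simp_all
  have hdeg := natDegree_mul hf hg
  have htdeg := natTrailingDegree_mul hf hg
  rw [← hfg, natDegree_monomial_eq N hp] at hdeg
  rw [← hfg, natTrailingDegree_monomial hp] at htdeg
  have := f.natTrailingDegree_le_natDegree
  have := g.natTrailingDegree_le_natDegree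
  exact ⟨_, _, eq_C_mul_X_pow_of_natTrailingDegree_eq_natDegree (by omega)⟩

end Polynomial

namespace LaurentPolynomial

open Polynomial (X toLaurent)

variable {R : Type*}

theorem eval₂_C_comp_C_T_one [CommSemiring R] (f : R[X]) :
    f.eval₂ (C.comp C) (C (T 1) : R[T;T⁻¹][T;T⁻¹]) = C (toLaurent f) := by
  have : toLaurent f = f.eval₂ C (T 1) := by
    conv_lhs => rw [← Polynomial.eval₂_C_X (p := f)]
    rw [Polynomial.hom_eval₂, Polynomial.toLaurent_X]
    congr 1
    ext; simp
  rw [this, Polynomial.hom_eval₂]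

theorem C_dvd_C [CommSemiring R] {a b : R} (h : (C a : R[T;T⁻¹]) ∣ C b) : a ∣ b := by
  simpa [eval₂_C] using map_dvd (eval₂ (RingHom.id R) (1 : Rˣ)) h

theorem C_dvd_toLaurent_iff [CommSemiring R] {a : R} {f : R[X]} :
    (C a : R[T;T⁻¹]) ∣ toLaurent f ↔ Polynomial.C a ∣ f := by
  refine ⟨fun ⟨v, hv⟩ ↦ ?_, fun h ↦ by simpa using map_dvd toLaurent h⟩
  obtain ⟨n, v', hv'⟩ := exists_T_pow v
  have key : Polynomial.C a * v' = f * X ^ n := by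
    apply Polynomial.toLaurent_injective
    rw [map_mul, hv', Polynomial.toLaurent_C, map_mul, Polynomial.toLaurent_X_pow, ← mul_assoc,
      ← hv]
  refine (Polynomial.C_dvd_iff_dvd_coeff _ _).mpr fun i ↦ ⟨v'.coeff (i + n), ?_⟩
  simpa only [Polynomial.coeff_C_mul, Polynomial.coeff_mul_X_pow] using
    (congrArg (Polynomial.coeff · (i + n)) key).symm

theorem exists_eq_C_mul_T_of_dvd_C [CommSemiring R] [NoZeroDivisors R] {w : R[T;T⁻¹]} {p : R}
    (hp : p ≠ 0) (h : w ∣ C p) : ∃ (c : R) (n : ℤ), w = C c * T n := by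
  obtain ⟨v, hv⟩ := h
  obtain ⟨m, w', hw'⟩ := exists_T_pow w
  obtain ⟨l, v', hv'⟩ := exists_T_pow v
  have key : w' * v' = Polynomial.C p * X ^ (m + l) := by
    apply Polynomial.toLaurent_injective
    rw [map_mul, hw', hv', Polynomial.toLaurent_C_mul_X_pow, mul_mul_mul_comm, ← hv, ← T_add]
    norm_cast
  obtain ⟨c, k, rfl⟩ :=
    Polynomial.exists_eq_C_mul_X_pow_of_dvd_C_mul_X_pow hp ⟨v', key.symm⟩
  refine ⟨c, k - m, ?_⟩
  rw [sub_eq_add_neg, ← mul_T_assoc, ← Polynomial.toLaurent_C_mul_X_pow, hw', mul_T_assoc]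
  simp

end LaurentPolynomial

open LaurentPolynomial in
theorem stmt13_general {S : Type*} [CommRing S] [IsDomain S]
    (P Q : Polynomial S) (hP : Irreducible P)
    (hQ0 : Q.coeff 0 ≠ 0)
    (hPdeg : 0 < P.natDegree) :
    let L := LaurentPolynomial (LaurentPolynomial S)
    let φ : S →+* L := LaurentPolynomial.C.comp LaurentPolynomial.C
    let x : L := LaurentPolynomial.T 1
    let y : L := LaurentPolynomial.C (LaurentPolynomial.T 1)
    let z : L := Polynomial.eval₂ φ y P * LaurentPolynomial.T (-1)
    ∀ u : L, u * y = Polynomial.eval₂ φ z Q →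
      ∀ w : L, w ∣ z → w ∣ u → IsUnit w := by
  intro L φ _ y z u hu w hwz hwu
  have hwP : w ∣ C P.toLaurent := by
    have hz : z * T 1 = C P.toLaurent := by
      rw [mul_T_assoc, neg_add_cancel, T_zero, mul_one, eval₂_C_comp_C_T_one]
    exact hz ▸ hwz.mul_right _
  have hwQ : w ∣ C (C (Q.coeff 0)) := by
    have hzQ : z ∣ Q.eval₂ φ z - φ (Q.coeff 0) := by
      simpa using _root_.map_dvd (Polynomial.eval₂RingHom φ z) Polynomial.X_dvd_sub_C
    exact (dvd_sub_right (hu ▸ hwu.mul_right y)).mp (hwz.trans hzQ)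
  obtain ⟨c, n, rfl⟩ :=
    exists_eq_C_mul_T_of_dvd_C (Polynomial.toLaurent_ne_zero.mpr hP.ne_zero) hwP
  have hcP : c ∣ P.toLaurent := C_dvd_C ((dvd_mul_right _ _).trans hwP)
  obtain ⟨s, k, rfl⟩ := exists_eq_C_mul_T_of_dvd_C hQ0 (C_dvd_C ((dvd_mul_right _ _).trans hwQ))
  have hs : IsUnit s :=
    hP.isPrimitive hPdeg.ne' s (C_dvd_toLaurent_iff.mp ((dvd_mul_right _ _).trans hcP))
  exact (((hs.map C).mul (isUnit_T k)).map C).mul (isUnit_T n)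

open LaurentPolynomial in
/-- Coprimality in the caterpillar setup (rank-two version).  Let `S` be a UFD and let
`P, Q ∈ S[w]` be irreducible one-variable polynomials with nonzero constant term (i.e. not
divisible by their variable), each of positive degree (`P` depends on `y`, `Q` on `x`), and
`P` not associate to `Q`.  In the Laurent polynomial ring `L = S[x^{±1}, y^{±1}]` (realized as
`LaurentPolynomial (LaurentPolynomial S)`, with `x` the outer and `y` the inner variable), set
`z = P(y)/x` and let `u` satisfy `u·y = Q(z)` (the assumption `Q(z)/y ∈ L`).  Then
`gcd(z,u) = 1` in `L`: every common divisor of `z` and `u` is a unit. -/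
theorem stmt13 {S : Type*} [CommRing S] [IsDomain S] [UniqueFactorizationMonoid S]
    (P Q : Polynomial S) (hP : Irreducible P) (hQ : Irreducible Q)
    (hP0 : P.coeff 0 ≠ 0) (hQ0 : Q.coeff 0 ≠ 0)
    (hPdeg : 0 < P.natDegree) (hQdeg : 0 < Q.natDegree)
    (hPQ : ¬ Associated P Q) :
    let L := LaurentPolynomial (LaurentPolynomial S)
    let φ : S →+* L := LaurentPolynomial.C.comp LaurentPolynomial.C
    let x : L := LaurentPolynomial.T 1
    let y : L := LaurentPolynomial.C (LaurentPolynomial.T 1)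
    let z : L := Polynomial.eval₂ φ y P * LaurentPolynomial.T (-1)
    ∀ u : L, u * y = Polynomial.eval₂ φ z Q →
      ∀ w : L, w ∣ z → w ∣ u → IsUnit w :=
  stmt13_general P Q hP hQ0 hPdeg
end

section
/- In the b = 0 square case: let S be a UFD, P(y) ∈ S[y] irreducible of degree k ≥ 1 with P(0) ≠ 0, Q ∈ S irreducible with Q not associate to P, and let d ≤ k be such that F̂ = P(y)/y^d satisfies the normalization conditions. Define in Frac(S)(x,y): z = P(y)/(x·y^d), u = Q/y, v = R(u)/(z·u^{k−d}) where R(u) = u^k·P(Q/u)/Q^d. Then v = x·(unit of S); i.e., x_0 ∝ x_4 and the exchange graph is a square. -/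
open MvPolynomial in
/-- The `b = 0` square: let `S` be a UFD, `P ∈ S[w]` irreducible of degree `k ≥ 1` with
`P(0) ≠ 0`, and `Q ∈ S` irreducible with `Q ∤ P`.  Let `d` be the exact power of `Q` dividing
`x^k·P(Q/x)`, i.e. `Q^d` divides every `a_j·Q^j` but `Q^{d+1}` does not (so the exchange
Laurent polynomial is `F̂ = P(y)/y^d`).  In `Frac(S)(x,y)` set `z = P(y)/(x·y^d)`,
`u = Q/y`, `R(u) = u^k·P(Q/u)/Q^d`, and `v = R(u)/(z·u^{k−d})`.  Then `v` is a unit of `S`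
times `x`: the mutation sequence returns after four steps (`x_0 ∝ x_4`), and the exchange
graph is a square. -/
theorem stmt18 {S : Type*} [CommRing S] [IsDomain S] [UniqueFactorizationMonoid S]
    (P : Polynomial S) (hP : Irreducible P) (hPdeg : 0 < P.natDegree) (hP0 : P.coeff 0 ≠ 0)
    (Q : S) (hQ : Irreducible Q) (hQP : ¬ ∀ j, Q ∣ P.coeff j)
    (d : ℕ) (hdk : d ≤ P.natDegree)
    (hd1 : ∀ j, Q ^ d ∣ P.coeff j * Q ^ j)
    (hd2 : ¬ ∀ j, Q ^ (d + 1) ∣ P.coeff j * Q ^ j) :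
    let 𝔽 := FractionRing (MvPolynomial (Fin 2) S)
    let φ : S →+* 𝔽 := (algebraMap (MvPolynomial (Fin 2) S) 𝔽).comp
      (C : S →+* MvPolynomial (Fin 2) S)
    let x := algebraMap (MvPolynomial (Fin 2) S) 𝔽 (X 0)
    let y := algebraMap (MvPolynomial (Fin 2) S) 𝔽 (X 1)
    let k := P.natDegree
    let p := Polynomial.eval₂ φ y P
    let q := φ Q
    let z := p / (x * y ^ d)
    let u := q / y
    let Ru := (∑ jj ∈ Finset.range (k + 1), φ (P.coeff jj) * q ^ jj * u ^ (k - jj)) / q ^ d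
    let v := Ru / (z * u ^ (k - d))
    ∃ s : S, IsUnit s ∧ v = φ s * x := by
  intro 𝔽 φ x y k p q z u Ru v
  have halg : Function.Injective (algebraMap (MvPolynomial (Fin 2) S) 𝔽) :=
    IsFractionRing.injective _ _
  have hx : x ≠ 0 := by
    intro h
    have : (X 0 : MvPolynomial (Fin 2) S) = 0 := halg (by rw [map_zero]; exact h)
    exact X_ne_zero 0 this
  have hy : y ≠ 0 := by
    intro h
    have : (X 1 : MvPolynomial (Fin 2) S) = 0 := halg (by rw [map_zero]; exact h)
    exact X_ne_zero 1 this
  have hq : q ≠ 0 := by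
    intro h
    have : (C Q : MvPolynomial (Fin 2) S) = 0 := halg (by rw [map_zero]; exact h)
    exact hQ.ne_zero (by simpa using this)
  have hp : p ≠ 0 := by
    have hcomp : p = algebraMap (MvPolynomial (Fin 2) S) 𝔽
        (Polynomial.eval₂ (C : S →+* MvPolynomial (Fin 2) S) (X 1) P) := by
      rw [Polynomial.hom_eval₂]
    intro h
    have h2 : Polynomial.eval₂ (C : S →+* MvPolynomial (Fin 2) S) (X 1) P = 0 :=
      halg (by rw [← hcomp, h, map_zero])
    -- apply the retraction g : MvPolynomial (Fin 2) S →+* S[w]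
    set g : MvPolynomial (Fin 2) S →+* Polynomial S :=
      (eval₂Hom (Polynomial.C : S →+* Polynomial S) (fun _ => Polynomial.X))
    have h3 : g (Polynomial.eval₂ (C : S →+* MvPolynomial (Fin 2) S) (X 1) P) = 0 := by
      rw [h2, map_zero]
    rw [Polynomial.hom_eval₂] at h3
    have h4 : (g.comp (C : S →+* MvPolynomial (Fin 2) S)) = (Polynomial.C : S →+* Polynomial S) := by
      ext s; simp [g]
    rw [h4] at h3
    have h5 : g (X 1) = Polynomial.X := by simp [g]
    rw [h5, Polynomial.eval₂_C_X] at h3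
    exact hP.ne_zero h3
  refine ⟨1, isUnit_one, ?_⟩
  rw [map_one, one_mul]
  have hpsum : p = ∑ jj ∈ Finset.range (k + 1), φ (P.coeff jj) * y ^ jj := by
    show Polynomial.eval₂ φ y P = _
    rw [Polynomial.eval₂_eq_sum_range]
  have hsum : (∑ jj ∈ Finset.range (k + 1), φ (P.coeff jj) * q ^ jj * u ^ (k - jj))
      = q ^ k * p / y ^ k := by
    rw [eq_div_iff (pow_ne_zero _ hy), hpsum, Finset.mul_sum, Finset.sum_mul]
    refine Finset.sum_congr rfl fun j hj => ?_
    have hjk : j ≤ k := Nat.lt_succ_iff.mp (Finset.mem_range.mp hj)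
    have hyk : (y : 𝔽) ^ k = y ^ (k - j) * y ^ j := by
      rw [← pow_add, Nat.sub_add_cancel hjk]
    have hqk : (q : 𝔽) ^ k = q ^ j * q ^ (k - j) := by
      rw [← pow_add, Nat.add_sub_cancel' hjk]
    show φ (P.coeff j) * q ^ j * (q / y) ^ (k - j) * y ^ k
        = q ^ k * (φ (P.coeff j) * y ^ j)
    rw [div_pow, hyk, hqk]
    have hykj : (y : 𝔽) ^ (k - j) ≠ 0 := pow_ne_zero _ hy
    rw [mul_div_assoc', div_mul_eq_mul_div, div_eq_iff hykj]
    ring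
  have hzu : z * u ^ (k - d) = p * q ^ (k - d) / (x * y ^ k) := by
    show p / (x * y ^ d) * (q / y) ^ (k - d) = _
    rw [div_pow, div_mul_div_comm]
    congr 1
    rw [mul_assoc, ← pow_add, Nat.add_sub_cancel' hdk]
  show Ru / (z * u ^ (k - d)) = x
  rw [hzu]
  show (∑ jj ∈ Finset.range (k + 1), φ (P.coeff jj) * q ^ jj * u ^ (k - jj)) / q ^ d
      / (p * q ^ (k - d) / (x * y ^ k)) = x
  rw [hsum]
  have hqkd : (q : 𝔽) ^ k = q ^ d * q ^ (k - d) := by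
    rw [← pow_add, Nat.add_sub_cancel' hdk]
  rw [hqkd]
  have hqd : (q : 𝔽) ^ d ≠ 0 := pow_ne_zero _ hq
  have hqkd' : (q : 𝔽) ^ (k - d) ≠ 0 := pow_ne_zero _ hq
  have hyk : (y : 𝔽) ^ k ≠ 0 := pow_ne_zero _ hy
  rw [div_div_eq_mul_div, div_eq_iff (mul_ne_zero hp hqkd'), div_mul_eq_mul_div,
    div_mul_eq_mul_div, div_div, div_eq_iff (mul_ne_zero hyk hqd)]
  ring
end
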